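/- Let C be an X-neighbour transitive code in H(m,q) with minimum distance δ ≥ 3, and let Δ be a block of imprimitivity for the action of X on C. Then the setwise stabiliser X_Δ acts transitively on Δ, and whenever ν₁, ν₂ are neighbours of Δ (vertices at distance 1 from Δ) there is an element of X_Δ mapping ν₁ to ν₂; moreover Δ has minimum distance at least δ. -/
import Mathlib


/-- Distance from a vertex to a code. -/
noncomputable def distToCode {ι Q : Type*} [Fintype ι] [DecidableEq Q]
    (ν : ι → Q) (C : Set (ι → Q)) : ℕ :=
  sInf {d | ∃ β ∈ C, d = hammingDist ν β}

/-- The automorphism of `H(m,q)` determined by `h ∈ Sym(Q)^m`, `σ ∈ Sym(Fin m)`. -/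
def hammAut {m : ℕ} {Q : Type*} (h : Fin m → Equiv.Perm Q) (σ : Equiv.Perm (Fin m)) :
    Equiv.Perm (Fin m → Q) :=
  (Equiv.piCongrRight h).trans (Equiv.arrowCongr σ (Equiv.refl Q))

/-- `C` is `X`-neighbour transitive: `X` consists of Hamming graph automorphisms,
stabilises `C` setwise, and acts transitively on `C` and on the neighbour set `C₁`. -/
def NbrTrans {m : ℕ} {Q : Type*} [DecidableEq Q]
    (X : Subgroup (Equiv.Perm (Fin m → Q))) (C : Set (Fin m → Q)) : Prop :=
  (∀ x ∈ X, ∃ h σ, x = hammAut h σ) ∧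
  (∀ x ∈ X, (⇑x) '' C = C) ∧
  (∀ α ∈ C, ∀ β ∈ C, ∃ x ∈ X, x α = β) ∧
  (∀ ν₁ ν₂ : Fin m → Q, distToCode ν₁ C = 1 → distToCode ν₂ C = 1 →
    ∃ x ∈ X, x ν₁ = ν₂)


lemma hammAut_apply {m : ℕ} {Q : Type*} (h : Fin m → Equiv.Perm Q)
    (σ : Equiv.Perm (Fin m)) (ν : Fin m → Q) (i : Fin m) :
    hammAut h σ ν i = h (σ.symm i) (ν (σ.symm i)) := rfl

lemma hammAut_dist {m : ℕ} {Q : Type*} [DecidableEq Q] (h : Fin m → Equiv.Perm Q)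
    (σ : Equiv.Perm (Fin m)) (ν μ : Fin m → Q) :
    hammingDist (hammAut h σ ν) (hammAut h σ μ) = hammingDist ν μ := by
  simp only [hammingDist]
  apply Finset.card_bij' (fun i _ => σ.symm i) (fun i _ => σ i)
  · intro a ha
    simp only [Finset.mem_filter, Finset.mem_univ, true_and, hammAut_apply] at ha ⊢
    simpa using ha
  · intro a ha
    simp only [Finset.mem_filter, Finset.mem_univ, true_and, hammAut_apply] at ha ⊢
    simpa using ha
  · intro a _; simp
  · intro a _; simp

/-- For an `X`-neighbour transitive code `C` with minimum distance `δ ≥ 3` and a block of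
imprimitivity `Δ` for `X` on `C`: the setwise stabiliser of `Δ` acts transitively on `Δ` and
on the neighbours of `Δ`, and `Δ` has minimum distance at least `δ`. -/
theorem stmt_7 {m : ℕ} {Q : Type*} [DecidableEq Q]
    (X : Subgroup (Equiv.Perm (Fin m → Q))) (C : Set (Fin m → Q))
    (hNT : NbrTrans X C) (δ : ℕ) (hδ3 : 3 ≤ δ)
    (hδ : ∀ α ∈ C, ∀ β ∈ C, α ≠ β → δ ≤ hammingDist α β)
    (Δ : Set (Fin m → Q)) (hΔC : Δ ⊆ C) (hne : Δ.Nonempty)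
    (hblock : ∀ x ∈ X, (⇑x) '' Δ = Δ ∨ Disjoint ((⇑x) '' Δ) Δ) :
    (∀ α ∈ Δ, ∀ β ∈ Δ, ∃ x ∈ X, (⇑x) '' Δ = Δ ∧ x α = β) ∧
    (∀ ν₁ ν₂ : Fin m → Q, distToCode ν₁ Δ = 1 → distToCode ν₂ Δ = 1 →
      ∃ x ∈ X, (⇑x) '' Δ = Δ ∧ x ν₁ = ν₂) ∧
    (∀ α ∈ Δ, ∀ β ∈ Δ, α ≠ β → δ ≤ hammingDist α β) := by
  classical
  obtain ⟨hform, hstab, htransC, htransN⟩ := hNT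
  have hiso : ∀ x ∈ X, ∀ ν μ, hammingDist (x ν) (x μ) = hammingDist ν μ := by
    intro x hx ν μ
    obtain ⟨h, σ, rfl⟩ := hform x hx
    exact hammAut_dist h σ ν μ
  have hSet : ∀ (ν : Fin m → Q), distToCode ν Δ = 1 → ∃ β ∈ Δ, hammingDist ν β = 1 := by
    intro ν hν
    have hne' : {d | ∃ β ∈ Δ, d = hammingDist ν β}.Nonempty := by
      obtain ⟨β, hβ⟩ := hne; exact ⟨_, β, hβ, rfl⟩
    have hmem := Nat.sInf_mem hne'
    rw [show sInf {d | ∃ β ∈ Δ, d = hammingDist ν β} = distToCode ν Δ from rfl, hν] at hmem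
    obtain ⟨β, hβ, hd⟩ := hmem
    exact ⟨β, hβ, hd.symm⟩
  have hdC : ∀ (ν : Fin m → Q), distToCode ν Δ = 1 → distToCode ν C = 1 := by
    intro ν hν
    obtain ⟨β, hβ, hd⟩ := hSet ν hν
    have h1 : (1 : ℕ) ∈ {d | ∃ β ∈ C, d = hammingDist ν β} := ⟨β, hΔC hβ, hd.symm⟩
    have hle : distToCode ν C ≤ 1 := Nat.sInf_le h1
    have hne0 : distToCode ν C ≠ 0 := by
      intro h0
      have hmem := Nat.sInf_mem ⟨1, h1⟩
      rw [show sInf {d | ∃ β ∈ C, d = hammingDist ν β} = distToCode ν C from rfl, h0] at hmem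
      obtain ⟨γ, hγ, hd0⟩ := hmem
      have hνγ : ν = γ := hammingDist_eq_zero.mp hd0.symm
      subst hνγ
      have hne'' : ν ≠ β := by
        intro h; subst h; simp [hammingDist_self] at hd
      have := hδ ν hγ β (hΔC hβ) hne''
      omega
    omega
  have huniq : ∀ (ν β γ : Fin m → Q), β ∈ C → γ ∈ C → hammingDist ν β = 1 →
      hammingDist ν γ = 1 → β = γ := by
    intro ν β γ hβ hγ h1 h2
    by_contra hne'
    have hd := hδ β hβ γ hγ hne'
    have htri := hammingDist_triangle β ν γ
    rw [hammingDist_comm β ν] at htri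
    omega
  refine ⟨?_, ?_, fun α hα β hβ hne' => hδ α (hΔC hα) β (hΔC hβ) hne'⟩
  · intro α hα β hβ
    obtain ⟨x, hx, hxab⟩ := htransC α (hΔC hα) β (hΔC hβ)
    refine ⟨x, hx, ?_, hxab⟩
    rcases hblock x hx with hb | hb
    · exact hb
    · exact (Set.disjoint_left.mp hb ⟨α, hα, hxab⟩ hβ).elim
  · intro ν₁ ν₂ h1 h2
    obtain ⟨β₁, hβ₁, hd1⟩ := hSet ν₁ h1
    obtain ⟨β₂, hβ₂, hd2⟩ := hSet ν₂ h2
    obtain ⟨x, hx, hxv⟩ := htransN ν₁ ν₂ (hdC ν₁ h1) (hdC ν₂ h2)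
    have hxβ₁C : x β₁ ∈ C := by
      rw [← hstab x hx]; exact ⟨β₁, hΔC hβ₁, rfl⟩
    have hd1' : hammingDist ν₂ (x β₁) = 1 := by
      rw [← hxv, hiso x hx]; exact hd1
    have hxβ : x β₁ = β₂ := huniq ν₂ _ _ hxβ₁C (hΔC hβ₂) hd1' hd2
    refine ⟨x, hx, ?_, hxv⟩
    rcases hblock x hx with hb | hb
    · exact hb
    · exact (Set.disjoint_left.mp hb ⟨β₁, hβ₁, hxβ⟩ hβ₂).elim
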